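/- For any x ≥ 2 and any multiplicative function f with |f(n)| ≤ 1, we have S(x) = (1/log x) ∑_{p prime, m ≥ 1, pm ≤ x} f(m) f(p) log p + O(x / log x), where S(x) = ∑_{n ≤ x} f(n). -/

import Mathlib

/-!
Write `log x = log (x / n) + log n`. The terms `f n * log (x / n)` contribute at most
`∑_{n ≤ x} log (x / n) ≤ x` (by `nⁿ / n! ≤ eⁿ`), and `log n = ∑_{d ∣ n} Λ d`
turns `∑_{n ≤ x} f n log n` into `∑_{d ≤ x} Λ d ∑_{m ≤ x / d} f (d m)`. For a prime `d = p`,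
`f (p m) = f p f m` unless `p ∣ m`, so replacing one by the other costs `O(x log p / p²)`; the
proper prime powers `d` contribute `O(x Λ d / d)`. Both error sums are bounded in terms of the
convergent series `∑ log n / n²`.
-/

open Finset MeasureTheory
open scoped Classical BigOperators

/-- The primes `p ≤ y`. -/
noncomputable def primesUpTo (y : ℝ) : Finset ℕ :=
  (Finset.Icc 1 ⌊y⌋₊).filter Nat.Prime

/-- The truncated Euler product `F_x(s) = ∏_{p ≤ x} (1 + ∑_{k ≥ 1} f(p^k) p^{-ks})`. -/
noncomputable def Fx (f : ℕ → ℂ) (x : ℝ) (s : ℂ) : ℂ :=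
  ∏ p ∈ primesUpTo x, (1 + ∑' k : ℕ, f (p ^ (k + 1)) / (p : ℂ) ^ (((k : ℂ) + 1) * s))

/-- `L(x)² = ∑_{|N| ≤ (log x)² + 1} (N²+1)⁻¹ sup_{|t-N| ≤ 1/2} |F_x(1+it)|²`. -/
noncomputable def Lsq (f : ℕ → ℂ) (x : ℝ) : ℝ :=
  ∑ N ∈ Finset.Icc (-⌊(Real.log x) ^ 2 + 1⌋) ⌊(Real.log x) ^ 2 + 1⌋,
    (1 / ((N : ℝ) ^ 2 + 1)) *
      sSup ((fun t : ℝ => ‖Fx f x (1 + t * Complex.I)‖ ^ 2) ''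
        Set.Icc ((N : ℝ) - 1 / 2) ((N : ℝ) + 1 / 2))

/-- The set `P_k` of primes `p` with `(log x)^4 < p ≤ x/2` and
`x^{1-e^{1-k}} < p ≤ x^{1-e^{-k}}`. -/
noncomputable def Pk (x : ℝ) (k : ℕ) : Finset ℕ :=
  (Finset.Icc 1 ⌊x⌋₊).filter (fun p => p.Prime ∧ (Real.log x) ^ 4 < (p : ℝ) ∧
    (p : ℝ) ≤ x / 2 ∧ x ^ (1 - Real.exp (1 - (k : ℝ))) < (p : ℝ) ∧
    (p : ℝ) ≤ x ^ (1 - Real.exp (-(k : ℝ))))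

/-- The triple convolution sum `S_k(x)`. -/
noncomputable def Sk (f : ℕ → ℂ) (x : ℝ) (k : ℕ) : ℂ :=
  ∑ p ∈ Pk x k, ∑ q ∈ primesUpTo (x / p), ∑ n ∈ Finset.Icc 1 ⌊x / (p * q)⌋₊,
    (f p * (Real.log p : ℂ) / (Real.log (x / p) : ℂ)) * f n * f q * (Real.log q : ℂ)

open scoped ArithmeticFunction.vonMangoldt Nat

theorem sum_log_div_le {x : ℝ} (hx : 1 ≤ x) : ∑ n ∈ Icc 1 ⌊x⌋₊, Real.log (x / n) ≤ x := by
  set X := ⌊x⌋₊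
  have hX : (0 : ℝ) < X := by exact_mod_cast Nat.floor_pos.2 hx
  have h_sum : ∑ n ∈ Icc 1 X, Real.log (x / n) = X * Real.log x - Real.log X ! := by
    rw [← prod_Ico_id_eq_factorial, Ico_add_one_right_eq_Icc, Nat.cast_prod,
      Real.log_prod fun n hn => by simp at hn ⊢; omega]
    rw [sum_congr rfl fun n hn => Real.log_div (by linarith) (by simp at hn ⊢; omega),
      sum_sub_distrib, sum_const, Nat.card_Icc, nsmul_eq_mul]
    simp
  have h_factorial : X * Real.log X - Real.log X ! ≤ X := by
    have := Real.pow_div_factorial_le_exp (x := X) hX.le X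
    rw [div_le_iff₀ (by positivity)] at this
    have := Real.log_le_log (by positivity) this
    rw [Real.log_mul (by positivity) (by positivity), Real.log_exp, Real.log_pow] at this
    linarith
  have h_log : X * Real.log (x / X) ≤ x - X := by
    have := Real.log_le_sub_one_of_pos (show 0 < x / X by positivity)
    calc X * Real.log (x / X) ≤ X * (x / X - 1) := by gcongr
      _ = x - X := by field_simp
  rw [Real.log_div (by linarith) hX.ne'] at h_log
  linarith

theorem sum_Icc_sum_divisorsAntidiagonal {M : Type*} [AddCommMonoid M] (F : ℕ → ℕ → M)
    (N : ℕ) :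
    ∑ n ∈ Icc 1 N, ∑ x ∈ n.divisorsAntidiagonal, F x.1 x.2
      = ∑ d ∈ Icc 1 N, ∑ m ∈ Icc 1 (N / d), F d m := by
  rw [sum_sigma', sum_sigma']
  refine sum_nbij' (fun x => ⟨x.2.1, x.2.2⟩) (fun x => ⟨x.1 * x.2, (x.1, x.2)⟩)
    ?_ ?_ ?_ ?_ ?_
  · rintro ⟨n, d, m⟩ h
    simp only [mem_sigma, mem_Icc, Nat.mem_divisorsAntidiagonal] at h ⊢
    obtain ⟨⟨-, hN⟩, rfl, hdm⟩ := h
    have hd : 0 < d := Nat.pos_of_ne_zero (left_ne_zero_of_mul hdm)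
    have hm : 0 < m := Nat.pos_of_ne_zero (right_ne_zero_of_mul hdm)
    refine ⟨⟨hd, le_trans (Nat.le_mul_of_pos_right d hm) hN⟩, hm, ?_⟩
    rw [Nat.le_div_iff_mul_le hd]
    linarith
  · rintro ⟨d, m⟩ h
    simp only [mem_sigma, mem_Icc, Nat.mem_divisorsAntidiagonal] at h ⊢
    obtain ⟨⟨hd, -⟩, hm, hmN⟩ := h
    have := (Nat.le_div_iff_mul_le hd).1 hmN
    exact ⟨⟨Nat.one_le_iff_ne_zero.2 (by positivity), by linarith⟩, trivial, by positivity⟩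
  · rintro ⟨n, d, m⟩ h
    simp only [mem_sigma, mem_Icc, Nat.mem_divisorsAntidiagonal] at h
    simp [h.2.1]
  · intro; simp
  · intro; simp

theorem sum_mul_log_eq_sum_vonMangoldt_mul (g : ℕ → ℂ) (N : ℕ) :
    ∑ n ∈ Icc 1 N, g n * (Real.log n : ℂ)
      = ∑ d ∈ Icc 1 N, (Λ d : ℂ) * ∑ m ∈ Icc 1 (N / d), g (d * m) := by
  simp_rw [mul_sum, ← sum_Icc_sum_divisorsAntidiagonal fun d m => (Λ d : ℂ) * g (d * m)]
  refine sum_congr rfl fun n _ => ?_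
  rw [← ArithmeticFunction.vonMangoldt_sum, Complex.ofReal_sum, mul_sum,
    Nat.sum_divisorsAntidiagonal (fun d m => (Λ d : ℂ) * g (d * m))]
  refine sum_congr rfl fun d hd => ?_
  rw [Nat.mul_div_cancel' (Nat.dvd_of_mem_divisors hd), mul_comm]

theorem norm_sum_mul_sub_mul_le {f : ℕ → ℂ} (hmul : ∀ m n, m.Coprime n → f (m * n) = f m * f n)
    (hbd : ∀ n, ‖f n‖ ≤ 1) {p : ℕ} (hp : p.Prime) (M : ℕ) :
    ‖∑ m ∈ Icc 1 M, (f (p * m) - f p * f m)‖ ≤ 2 * (M / p : ℕ) := by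
  have h_coprime : ∀ m ∈ Icc 1 M, f (p * m) - f p * f m ≠ 0 → p ∣ m := fun m _ h => by
    by_contra hpm
    exact h (by rw [hmul p m ((Nat.Prime.coprime_iff_not_dvd hp).2 hpm), sub_self])
  have h_card : #{m ∈ Icc 1 M | p ∣ m} = M / p := by
    rw [← Nat.Ioc_filter_dvd_card_eq_div, ← Icc_add_one_left_eq_Ioc, zero_add]
  rw [← sum_filter_of_ne h_coprime, ← h_card]
  calc _ ≤ ∑ m ∈ Icc 1 M with p ∣ m, (2 : ℝ) := norm_sum_le_of_le _ fun m _ => ?_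
    _ = _ := by simp [mul_comm]
  calc ‖f (p * m) - f p * f m‖ ≤ ‖f (p * m)‖ + ‖f p‖ * ‖f m‖ := by
        rw [← norm_mul]; exact norm_sub_le _ _
    _ ≤ 1 + 1 * 1 := by gcongr <;> simp [hbd]
    _ = 2 := by norm_num

theorem log_div_sq_le_two_mul_rpow (n : ℕ) :
    Real.log n / (n : ℝ) ^ 2 ≤ 2 * ((n : ℝ) ^ (3 / 2 : ℝ))⁻¹ := by
  rcases Nat.eq_zero_or_pos n with rfl | hn
  · simp
  have hn : (0 : ℝ) < n := by exact_mod_cast hn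
  have h_sq : (n : ℝ) ^ 2 = (n : ℝ) ^ (1 / 2 : ℝ) * (n : ℝ) ^ (3 / 2 : ℝ) := by
    rw [← Real.rpow_add hn]; norm_num
  calc Real.log n / (n : ℝ) ^ 2 ≤ (n : ℝ) ^ (1 / 2 : ℝ) / (1 / 2) / (n : ℝ) ^ 2 := by
        gcongr; exact Real.log_le_rpow_div hn.le (by norm_num)
    _ = 2 * ((n : ℝ) ^ (3 / 2 : ℝ))⁻¹ := by
        rw [h_sq]; field_simp

theorem log_div_sq_nonneg (n : ℕ) : 0 ≤ Real.log n / (n : ℝ) ^ 2 :=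
  div_nonneg (Real.log_natCast_nonneg n) (sq_nonneg _)

theorem summable_log_div_sq : Summable fun n : ℕ => Real.log n / (n : ℝ) ^ 2 :=
  ((Real.summable_nat_rpow_inv.2 (by norm_num : (1 : ℝ) < 3 / 2)).mul_left 2).of_nonneg_of_le
    log_div_sq_nonneg log_div_sq_le_two_mul_rpow

theorem log_div_pow_le {p k : ℕ} (hp : 2 ≤ p) (hk : 2 ≤ k) :
    Real.log p / (p : ℝ) ^ k ≤ 4 * (1 / 2) ^ k * (Real.log p / (p : ℝ) ^ 2) := by
  obtain ⟨j, rfl⟩ := Nat.exists_eq_add_of_le' hk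
  have hp : (2 : ℝ) ≤ p := by exact_mod_cast hp
  have := log_div_sq_nonneg p
  calc Real.log p / (p : ℝ) ^ (j + 2) = (1 / p) ^ j * (Real.log p / (p : ℝ) ^ 2) := by
        rw [one_div_pow, pow_add]; field_simp
    _ ≤ (1 / 2) ^ j * (Real.log p / (p : ℝ) ^ 2) := by gcongr
    _ = 4 * (1 / 2) ^ (j + 2) * (Real.log p / (p : ℝ) ^ 2) := by ring

theorem sum_vonMangoldt_div_not_prime_le (N : ℕ) :
    ∑ d ∈ Icc 1 N with ¬d.Prime, Λ d / d ≤ 8 * ∑' n : ℕ, Real.log n / (n : ℝ) ^ 2 := by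
  set B := ∑' n : ℕ, Real.log n / (n : ℝ) ^ 2
  set g : ℕ → ℝ := fun d => if d.Prime then 0 else Λ d / d
  have h_primePow : ∑ d ∈ Icc 1 N with ¬d.Prime, Λ d / d
      = ∑ d ∈ Ioc 0 ⌊(N : ℝ)⌋₊ with IsPrimePow d, g d := by
    rw [Nat.floor_natCast, ← Icc_add_one_left_eq_Ioc, zero_add, sum_filter,
      sum_filter]
    refine sum_congr rfl fun d _ => ?_
    by_cases hd : IsPrimePow d <;> by_cases hp : d.Prime <;>
      simp [g, hd, hp, ArithmeticFunction.vonMangoldt_eq_zero_iff]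
  have h_term {p k : ℕ} (hp : p.Prime) (hk : 1 ≤ k) :
      g (p ^ k) ≤ 4 * (1 / 2) ^ k * (Real.log p / (p : ℝ) ^ 2) := by
    rcases hk.eq_or_lt with rfl | hk
    · simp [g, hp]
      positivity
    have h_not_prime : ¬(p ^ k).Prime := fun h => by have := Nat.Prime.eq_one_of_pow h; omega
    simp only [g, if_neg h_not_prime, ArithmeticFunction.vonMangoldt_apply_pow (by omega : k ≠ 0),
      ArithmeticFunction.vonMangoldt_apply_prime hp, Nat.cast_pow]
    exact log_div_pow_le hp.two_le hk
  have h_geom (K : ℕ) : ∑ k ∈ Icc 1 K, (1 / 2 : ℝ) ^ k ≤ 2 :=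
    (sum_le_sum_of_subset_of_nonneg (fun k hk => by simp at hk ⊢; omega)
      fun _ _ _ => by positivity).trans (sum_geometric_two_le (K + 1))
  rw [h_primePow, Chebyshev.sum_PrimePow_eq_sum_sum g (Nat.cast_nonneg N)]
  calc _ ≤ ∑ k ∈ Icc 1 ⌊Real.log N / Real.log 2⌋₊,
          ∑ p ∈ Ioc 0 ⌊(N : ℝ) ^ (1 / k : ℝ)⌋₊ with p.Prime, 4 * (1 / 2) ^ k * (Real.log p / (p : ℝ) ^ 2) := by
        gcongr with k hk p hp
        exact h_term (mem_filter.1 hp).2 (mem_Icc.1 hk).1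
    _ ≤ ∑ k ∈ Icc 1 ⌊Real.log N / Real.log 2⌋₊, 4 * (1 / 2) ^ k * B := by
        gcongr with k
        rw [← mul_sum]
        gcongr
        exact summable_log_div_sq.sum_le_tsum _ fun n _ => log_div_sq_nonneg n
    _ ≤ 8 * B := by
        rw [← sum_mul, ← mul_sum]
        have : 0 ≤ B := tsum_nonneg log_div_sq_nonneg
        nlinarith [h_geom ⌊Real.log N / Real.log 2⌋₊]

theorem norm_sum_mul_log_sub_sum_primes_le {f : ℕ → ℂ}
    (hmul : ∀ m n, m.Coprime n → f (m * n) = f m * f n) (hbd : ∀ n, ‖f n‖ ≤ 1) (N : ℕ) :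
    ‖∑ n ∈ Icc 1 N, f n * (Real.log n : ℂ) -
        ∑ p ∈ Icc 1 N with p.Prime, ∑ m ∈ Icc 1 (N / p), f m * f p * (Real.log p : ℂ)‖
      ≤ 10 * (∑' n : ℕ, Real.log n / (n : ℝ) ^ 2) * N := by
  set B := ∑' n : ℕ, Real.log n / (n : ℝ) ^ 2
  have h_primes : ∑ p ∈ Icc 1 N with p.Prime, (Λ p : ℂ) * ∑ m ∈ Icc 1 (N / p), f (p * m) -
        ∑ p ∈ Icc 1 N with p.Prime, ∑ m ∈ Icc 1 (N / p), f m * f p * (Real.log p : ℂ)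
      = ∑ p ∈ Icc 1 N with p.Prime,
          (Real.log p : ℂ) * ∑ m ∈ Icc 1 (N / p), (f (p * m) - f p * f m) := by
    rw [← sum_sub_distrib]
    refine sum_congr rfl fun p hp => ?_
    rw [ArithmeticFunction.vonMangoldt_apply_prime (mem_filter.1 hp).2, mul_sum,
      mul_sum, ← sum_sub_distrib]
    exact sum_congr rfl fun m _ => by ring
  have h_primes_le : ‖∑ p ∈ Icc 1 N with p.Prime,
      (Real.log p : ℂ) * ∑ m ∈ Icc 1 (N / p), (f (p * m) - f p * f m)‖ ≤ 2 * B * N := by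
    calc _ ≤ ∑ p ∈ Icc 1 N with p.Prime, Real.log p * (2 * ((N / p / p : ℕ) : ℝ)) :=
          norm_sum_le_of_le _ fun p hp => by
            rw [norm_mul, Complex.norm_real, Real.norm_of_nonneg (Real.log_natCast_nonneg p)]
            gcongr
            exact norm_sum_mul_sub_mul_le hmul hbd (mem_filter.1 hp).2 _
      _ ≤ ∑ p ∈ Icc 1 N with p.Prime, 2 * N * (Real.log p / (p : ℝ) ^ 2) := by
          refine sum_le_sum fun p _ => ?_
          have h_floor : ((N / p / p : ℕ) : ℝ) ≤ N / (p : ℝ) ^ 2 := by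
            rw [Nat.div_div_eq_div_mul, sq]
            exact_mod_cast Nat.cast_div_le
          calc Real.log p * (2 * ((N / p / p : ℕ) : ℝ))
              ≤ Real.log p * (2 * (N / (p : ℝ) ^ 2)) := by
                gcongr
            _ = 2 * N * (Real.log p / (p : ℝ) ^ 2) := by ring
      _ ≤ 2 * N * B := by
          rw [← mul_sum]
          gcongr
          exact summable_log_div_sq.sum_le_tsum _ fun n _ => log_div_sq_nonneg n
      _ = 2 * B * N := by ring
  have h_not_primes_le : ‖∑ d ∈ Icc 1 N with ¬d.Prime,
      (Λ d : ℂ) * ∑ m ∈ Icc 1 (N / d), f (d * m)‖ ≤ 8 * B * N := by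
    calc _ ≤ ∑ d ∈ Icc 1 N with ¬d.Prime, Λ d * ((N / d : ℕ) : ℝ) :=
          norm_sum_le_of_le _ fun d _ => by
            rw [norm_mul, Complex.norm_real,
              Real.norm_of_nonneg ArithmeticFunction.vonMangoldt_nonneg]
            gcongr
            exact (norm_sum_le_of_le _ fun m _ => hbd _).trans (by simp)
      _ ≤ N * ∑ d ∈ Icc 1 N with ¬d.Prime, Λ d / d := by
          rw [mul_sum]
          refine sum_le_sum fun d _ => ?_
          calc Λ d * ((N / d : ℕ) : ℝ) ≤ Λ d * (N / d) := by
                gcongr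
                exact Nat.cast_div_le
            _ = N * (Λ d / d) := by ring
      _ ≤ 8 * B * N := by
          nlinarith [sum_vonMangoldt_div_not_prime_le N, (Nat.cast_nonneg N : (0 : ℝ) ≤ N)]
  rw [sum_mul_log_eq_sum_vonMangoldt_mul, ← sum_filter_add_sum_filter_not _ Nat.Prime,
    add_sub_right_comm, h_primes]
  linarith [norm_add_le_of_le h_primes_le h_not_primes_le]

theorem norm_log_mul_sum_sub_sum_mul_log_le {f : ℕ → ℂ} (hbd : ∀ n, ‖f n‖ ≤ 1) {x : ℝ}
    (hx : 1 ≤ x) :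
    ‖(Real.log x : ℂ) * ∑ n ∈ Icc 1 ⌊x⌋₊, f n - ∑ n ∈ Icc 1 ⌊x⌋₊, f n * (Real.log n : ℂ)‖
      ≤ x := by
  rw [mul_sum, ← sum_sub_distrib]
  refine (norm_sum_le_of_le _ fun n hn => ?_).trans (sum_log_div_le hx)
  have hn0 : 0 < n := (mem_Icc.1 hn).1
  have hnx : (n : ℝ) ≤ x := (Nat.cast_le.2 (mem_Icc.1 hn).2).trans (Nat.floor_le (by linarith))
  have h_log : 0 ≤ Real.log (x / n) := Real.log_nonneg ((one_le_div (by positivity)).2 hnx)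
  calc ‖(Real.log x : ℂ) * f n - f n * (Real.log n : ℂ)‖ = ‖f n‖ * Real.log (x / n) := by
        rw [← Real.norm_of_nonneg h_log, ← Complex.norm_real, ← norm_mul,
          Real.log_div (by linarith) (by positivity)]
        push_cast
        ring_nf
    _ ≤ Real.log (x / n) := mul_le_of_le_one_left h_log (hbd n)

theorem stmt2 :
    ∃ C : ℝ, 0 < C ∧ ∀ x : ℝ, 2 ≤ x → ∀ f : ℕ → ℂ, f 1 = 1 →
      (∀ m n : ℕ, Nat.Coprime m n → f (m * n) = f m * f n) →
      (∀ n : ℕ, ‖f n‖ ≤ 1) →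
      ‖(∑ n ∈ Finset.Icc 1 ⌊x⌋₊, f n) -
        (1 / (Real.log x : ℂ)) * ∑ p ∈ primesUpTo x, ∑ m ∈ Finset.Icc 1 ⌊x / p⌋₊,
          f m * f p * (Real.log p : ℂ)‖ ≤ C * x / Real.log x := by
  set B := ∑' n : ℕ, Real.log n / (n : ℝ) ^ 2
  have hB : 0 ≤ B := tsum_nonneg log_div_sq_nonneg
  refine ⟨1 + 10 * B, by positivity, ?_⟩
  intro x hx f _ hmul hbd
  have h_log : 0 < Real.log x := Real.log_pos (by linarith)
  have h_floor : (⌊x⌋₊ : ℝ) ≤ x := Nat.floor_le (by linarith)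
  have h_primes : primesUpTo x = {p ∈ Icc 1 ⌊x⌋₊ | p.Prime} := rfl
  simp_rw [h_primes, Nat.floor_div_natCast]
  set S := ∑ n ∈ Icc 1 ⌊x⌋₊, f n
  set T := ∑ p ∈ Icc 1 ⌊x⌋₊ with p.Prime, ∑ m ∈ Icc 1 (⌊x⌋₊ / p), f m * f p * (Real.log p : ℂ)
  have h_main : ‖(Real.log x : ℂ) * S - T‖ ≤ (1 + 10 * B) * x := by
    have := norm_add_le_of_le (norm_log_mul_sum_sub_sum_mul_log_le hbd (by linarith : 1 ≤ x))
      (norm_sum_mul_log_sub_sum_primes_le hmul hbd ⌊x⌋₊)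
    rw [sub_add_sub_cancel] at this
    nlinarith
  have h_ne : (Real.log x : ℂ) ≠ 0 := Complex.ofReal_ne_zero.2 h_log.ne'
  rw [show S - 1 / (Real.log x : ℂ) * T = ((Real.log x : ℂ) * S - T) / (Real.log x : ℂ) by
    field_simp, norm_div, Complex.norm_real, Real.norm_of_nonneg h_log.le]
  gcongr
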